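/- arXiv:1910.09351 — 5 statements merged into one kernel-verified Lean document; each statement's English description precedes it below -/
import Mathlib

section
/- Let N ≥ 1 and K ≥ 0 be integers, let y ∈ ℝ^N, and let f_0, f_1, …, f_K ∈ ℝ^N be linearly independent. If ⟨f_j − y, f_j⟩ ≠ 0 for every j ∈ {0,…,K}, then there exists θ ∈ ℝ^{K+1} such that ‖Σ_{j=0}^{K} θ_j f_j − y‖² < min_{j ∈ {0,…,K}} ‖f_j − y‖². -/
/-!
Let `f j₀` be a component of least error. Projecting `y` orthogonally onto the line `ℝ ∙ f j₀`
gives a multiple `c • f j₀` whose error is smaller by `‖f j₀ - c • f j₀‖²` (Pythagoras), and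
this projection differs from `f j₀` because `⟪f j₀ - y, f j₀⟫ ≠ 0`. So `θ = c • e_{j₀}` works.
-/

open scoped InnerProductSpace

section

variable {E : Type*} [NormedAddCommGroup E] [InnerProductSpace ℝ E]

theorem Submodule.norm_sub_sq_eq_norm_sub_starProjection_sq_add (K : Submodule ℝ E)
    [K.HasOrthogonalProjection] {u : E} (hu : u ∈ K) (y : E) :
    ‖u - y‖ ^ 2 = ‖u - K.starProjection y‖ ^ 2 + ‖K.starProjection y - y‖ ^ 2 := by
  have hperp : ⟪u - K.starProjection y, K.starProjection y - y⟫_ℝ = 0 := by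
    rw [real_inner_comm, ← neg_sub y, inner_neg_left,
      K.starProjection_inner_eq_zero y _ (K.sub_mem hu (K.starProjection_apply_mem y)), neg_zero]
  rw [← sub_add_sub_cancel u (K.starProjection y) y, norm_add_sq_real, hperp]
  ring

theorem exists_norm_smul_sub_lt_of_inner_ne_zero {v y : E} (h : ⟪v - y, v⟫_ℝ ≠ 0) :
    ∃ c : ℝ, ‖c • v - y‖ < ‖v - y‖ := by
  set p := (ℝ ∙ v).starProjection y
  obtain ⟨c, hc⟩ := Submodule.mem_span_singleton.mp ((ℝ ∙ v).starProjection_apply_mem y)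
  refine ⟨c, ?_⟩
  have hv : v ∈ ℝ ∙ v := Submodule.mem_span_singleton_self v
  have hpv : ⟪p - y, v⟫_ℝ = 0 := by
    rw [← neg_sub, inner_neg_left, (ℝ ∙ v).starProjection_inner_eq_zero y v hv, neg_zero]
  -- `v - p` and `v - y` have the same inner product with `v`, so the projection misses `v`.
  have hvp : v - p ≠ 0 := by
    intro hzero
    apply h
    rw [← sub_add_sub_cancel v p y, inner_add_left, hzero, inner_zero_left, hpv, add_zero]
  rw [hc]
  refine lt_of_pow_lt_pow_left₀ 2 (norm_nonneg _) ?_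
  rw [(ℝ ∙ v).norm_sub_sq_eq_norm_sub_starProjection_sq_add hv y]
  exact lt_add_of_pos_left _ (pow_pos (norm_pos_iff.mpr hvp) 2)

end

theorem stmt_4_general (N K : ℕ)
    (f : Fin (K + 1) → EuclideanSpace ℝ (Fin N)) (y : EuclideanSpace ℝ (Fin N))
    (h : ∀ j, ⟪f j - y, f j⟫_ℝ ≠ 0) :
    ∃ θ : Fin (K + 1) → ℝ,
      ‖(∑ j, θ j • f j) - y‖ ^ 2 <
        Finset.univ.inf' Finset.univ_nonempty (fun j => ‖f j - y‖ ^ 2) := by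
  obtain ⟨j₀, -, hj₀⟩ := Finset.exists_mem_eq_inf' Finset.univ_nonempty
    (fun j => ‖f j - y‖ ^ 2)
  obtain ⟨c, hc⟩ := exists_norm_smul_sub_lt_of_inner_ne_zero (h j₀)
  refine ⟨Pi.single j₀ c, ?_⟩
  rw [hj₀, Fintype.sum_single_smul f c j₀]
  exact pow_lt_pow_left₀ hc (norm_nonneg _) two_ne_zero

/-- If `f_0, …, f_K` are linearly independent and `⟨f_j − y, f_j⟩ ≠ 0` for every `j`,
then some linear combination beats every single component:
`∃ θ, ‖∑ j θ_j f_j − y‖² < min_j ‖f_j − y‖²`. -/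
theorem stmt_4 (N K : ℕ) (hN : 1 ≤ N)
    (f : Fin (K + 1) → EuclideanSpace ℝ (Fin N)) (y : EuclideanSpace ℝ (Fin N))
    (hf : LinearIndependent ℝ f)
    (h : ∀ j, ⟪f j - y, f j⟫_ℝ ≠ 0) :
    ∃ θ : Fin (K + 1) → ℝ,
      ‖(∑ j, θ j • f j) - y‖ ^ 2 <
        Finset.univ.inf' Finset.univ_nonempty (fun j => ‖f j - y‖ ^ 2) :=
  stmt_4_general N K f y h
end

section
/- Let σ : ℝ → ℝ be admissible, i.e., σ is twice continuously differentiable and there exists z₀ ∈ ℝ with σ′(z₀) ≠ 0. Then for every finite list of real numbers a_1, …, a_N and every ε with 0 < ε ≤ 1, there exist real numbers p, q, r, s such that |p·σ(q·a_i + r) + s − a_i| < ε for every i ∈ {1,…,N}. (Equivalently: an affine map composed with σ composed with an affine map approximates the identity to within ε on any finite set of reals.) -/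
/-!
Near `z₀`, `σ` is affine to first order: `σ (q * x + z₀) ≈ σ z₀ + σ′(z₀) q x` for small `q`.
Undoing the outer affine part, `(q σ′(z₀))⁻¹ (σ (q * x + z₀) - σ z₀) → x` as `q → 0`, and for
finitely many points `x = aᵢ` a single small `q ≠ 0` works for all of them at once.
-/

open Filter Topology

theorem HasDerivAt.tendsto_inv_mul_sub_comp_mul_add {σ : ℝ → ℝ} {d z₀ : ℝ}
    (hσ : HasDerivAt σ d z₀) (hd : d ≠ 0) (x : ℝ) :
    Tendsto (fun q : ℝ => (q * d)⁻¹ * (σ (q * x + z₀) - σ z₀)) (𝓝[≠] 0) (𝓝 x) := by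
  have hline : HasDerivAt (fun q : ℝ => q * x + z₀) x 0 := by
    simpa using ((hasDerivAt_id (0 : ℝ)).mul_const x).add_const z₀
  have hcomp : HasDerivAt (fun q : ℝ => σ (q * x + z₀)) (d * x) 0 := by
    have hσ' : HasDerivAt σ d (0 * x + z₀) := by simpa using hσ
    exact hσ'.comp 0 hline
  have hlim := (hasDerivAt_iff_tendsto_slope.mp hcomp).const_mul d⁻¹
  rw [inv_mul_cancel_left₀ hd] at hlim
  refine hlim.congr fun q => ?_
  simp only [slope_def_field, zero_mul, zero_add, sub_zero, mul_inv]
  ring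

theorem stmt_8_general (σ : ℝ → ℝ) (z₀ : ℝ) (hz₀ : deriv σ z₀ ≠ 0)
    (N : ℕ) (a : Fin N → ℝ) (ε : ℝ) (hε : 0 < ε) :
    ∃ p q r s : ℝ, ∀ i : Fin N, |p * σ (q * a i + r) + s - a i| < ε := by
  have hσ : HasDerivAt σ (deriv σ z₀) z₀ :=
    (differentiableAt_of_deriv_ne_zero hz₀).hasDerivAt
  have hclose : ∀ᶠ q in 𝓝[≠] (0 : ℝ), ∀ i, |(q * deriv σ z₀)⁻¹ *
      (σ (q * a i + z₀) - σ z₀) - a i| < ε :=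
    eventually_all.mpr fun i =>
      (hσ.tendsto_inv_mul_sub_comp_mul_add hz₀ (a i)).eventually (Metric.ball_mem_nhds _ hε)
  obtain ⟨q, hq⟩ := hclose.exists
  refine ⟨(q * deriv σ z₀)⁻¹, q, z₀, -(q * deriv σ z₀)⁻¹ * σ z₀, fun i => ?_⟩
  convert hq i using 2
  ring

/-- If `σ` is admissible (C² with `σ′(z₀) ≠ 0` for some `z₀`), then for every finite list
of reals and every `0 < ε ≤ 1`, an affine map composed with `σ` composed with an affine
map approximates the identity within `ε` on that list. -/
theorem stmt_8 (σ : ℝ → ℝ) (hσ : ContDiff ℝ 2 σ) (z₀ : ℝ) (hz₀ : deriv σ z₀ ≠ 0)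
    (N : ℕ) (a : Fin N → ℝ) (ε : ℝ) (hε : 0 < ε) (hε1 : ε ≤ 1) :
    ∃ p q r s : ℝ, ∀ i : Fin N, |p * σ (q * a i + r) + s - a i| < ε :=
  stmt_8_general σ z₀ hz₀ N a ε hε
end

section
/- Let N ≥ 1 and K ≥ 1 be integers, let y, f_1, …, f_K ∈ ℝ^N, and let f_0 = (1,1,…,1) ∈ ℝ^N be the all-ones vector. Assume that f_0, f_1, …, f_K are linearly independent, that ⟨f_j − y, f_j⟩ ≠ 0 for every j ∈ {0,…,K}, and that σ : ℝ → ℝ is admissible (twice continuously differentiable with σ′(z₀) ≠ 0 for some z₀ ∈ ℝ). Then there exist θ ∈ ℝ^{K+1} and p, s ∈ ℝ such that the single-hidden-layer composite network output g ∈ ℝ^N, defined coordinatewise by g_i = p·σ(Σ_{j=0}^{K} θ_j (f_j)_i) + s, satisfies ‖g − y‖² < min_{j ∈ {0,…,K}} ‖f_j − y‖². -/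
open scoped InnerProductSpace Topology
open Filter

/-!
Since `⟪f j - y, f j⟫ ≠ 0`, rescaling the best component `f j` to its projection `t • f j` strictly
lowers the error. For `j = 0` that vector is constant, a network with `p = 0`. Otherwise, using
`f 0 = 1`, the hidden input `z₀ + ε • f j` with outer map `x ↦ t (x - σ z₀) / (σ'(z₀) ε)` is a
difference quotient of `σ` tending to `t • f j` as `ε → 0`, so a small `ε` also beats `f j`.
-/

theorem HasDerivAt.tendsto_slope_comp_mul {σ : ℝ → ℝ} {D z₀ : ℝ} (hσ : HasDerivAt σ D z₀)
    (x : ℝ) :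
    Tendsto (fun ε => (σ (z₀ + ε * x) - σ z₀) / ε) (𝓝[≠] 0) (𝓝 (D * x)) := by
  have hline : HasDerivAt (fun ε : ℝ => z₀ + ε * x) x 0 := by
    simpa using ((hasDerivAt_id (0 : ℝ)).mul_const x).const_add z₀
  have hcomp := (hσ.comp_of_eq 0 hline (by simp)).tendsto_slope_zero
  refine hcomp.congr fun ε => ?_
  simp [div_eq_inv_mul]

theorem tendsto_network_smul {ι : Type*} [Fintype ι] {σ : ℝ → ℝ} {D z₀ : ℝ}
    (hσ : HasDerivAt σ D z₀) (hD : D ≠ 0) (v : EuclideanSpace ℝ ι) (c : ℝ) :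
    Tendsto (fun ε => WithLp.toLp 2 fun i => c / (D * ε) * σ (z₀ + ε * v i) - c / (D * ε) * σ z₀)
      (𝓝[≠] 0) (𝓝 (c • v)) := by
  have hcoord : ∀ i, Tendsto (fun ε => c / (D * ε) * σ (z₀ + ε * v i) - c / (D * ε) * σ z₀)
      (𝓝[≠] 0) (𝓝 (c * v i)) := by
    intro i
    have h := (hσ.tendsto_slope_comp_mul (v i)).const_mul (c / D)
    rw [show c / D * (D * v i) = c * v i by field_simp] at h
    refine h.congr fun ε => ?_
    ring
  rw [show c • v = WithLp.toLp 2 fun i => c * v i by ext i; simp]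
  exact ((PiLp.continuous_toLp 2 _).tendsto _).comp (tendsto_pi_nhds.2 hcoord)

theorem exists_norm_smul_sub_sq_lt {E : Type*} [NormedAddCommGroup E] [InnerProductSpace ℝ E]
    {v y : E} (h : ⟪v - y, v⟫_ℝ ≠ 0) : ∃ t : ℝ, ‖t • v - y‖ ^ 2 < ‖v - y‖ ^ 2 := by
  have hv : v ≠ 0 := by rintro rfl; simp at h
  have hv2 : 0 < ‖v‖ ^ 2 := by positivity
  refine ⟨1 - ⟪v - y, v⟫_ℝ / ‖v‖ ^ 2, ?_⟩
  have hsplit : (1 - ⟪v - y, v⟫_ℝ / ‖v‖ ^ 2) • v - y = (v - y) - (⟪v - y, v⟫_ℝ / ‖v‖ ^ 2) • v := by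
    rw [sub_smul, one_smul]; abel
  rw [hsplit, norm_sub_sq_real, real_inner_smul_right, norm_smul, mul_pow, Real.norm_eq_abs, sq_abs]
  have : 0 < ⟪v - y, v⟫_ℝ ^ 2 := by positivity
  field_simp
  linarith

theorem stmt_10_general (N K : ℕ)
    (y : EuclideanSpace ℝ (Fin N)) (f : Fin (K + 1) → EuclideanSpace ℝ (Fin N))
    (hf0 : ∀ i, f 0 i = 1)
    (hnp : ∀ j, ⟪f j - y, f j⟫_ℝ ≠ 0)
    (σ : ℝ → ℝ) (hσ : ContDiff ℝ 2 σ) (z₀ : ℝ) (hz₀ : deriv σ z₀ ≠ 0) :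
    ∃ (θ : Fin (K + 1) → ℝ) (p s : ℝ) (g : EuclideanSpace ℝ (Fin N)),
      (∀ i, g i = p * σ (∑ j, θ j * f j i) + s) ∧
      ‖g - y‖ ^ 2 < Finset.univ.inf' Finset.univ_nonempty (fun j => ‖f j - y‖ ^ 2) := by
  obtain ⟨j, -, hj⟩ := Finset.exists_mem_eq_inf' Finset.univ_nonempty fun j => ‖f j - y‖ ^ 2
  obtain ⟨t, ht⟩ := exists_norm_smul_sub_sq_lt (hnp j)
  rw [hj]
  by_cases hj0 : j = 0
  · subst hj0
    exact ⟨0, 0, t, t • f 0, fun i => by simp [hf0 i], ht⟩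
  · have hσ' : HasDerivAt σ (deriv σ z₀) z₀ :=
      (hσ.differentiable (by norm_num)).differentiableAt.hasDerivAt
    obtain ⟨ε, hε⟩ := ((((tendsto_network_smul hσ' hz₀ (f j) t).sub_const y).norm.pow 2).eventually
      (gt_mem_nhds ht)).exists
    refine ⟨Pi.single 0 z₀ + Pi.single j ε, t / (deriv σ z₀ * ε), -(t / (deriv σ z₀ * ε) * σ z₀),
      _, fun i => ?_, hε⟩
    simp [add_mul, Finset.sum_add_distrib, Pi.single_apply, hf0 i, sub_eq_add_neg]

/-- Single-layer composite network: if `f_0` is the all-ones vector, `f_0, …, f_K` are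
linearly independent, `⟨f_j − y, f_j⟩ ≠ 0` for all `j`, and `σ` is admissible, then there
is a network `g_i = p·σ(∑ j θ_j (f_j)_i) + s` with
`‖g − y‖² < min_j ‖f_j − y‖²`. -/
theorem stmt_10 (N K : ℕ) (hN : 1 ≤ N) (hK : 1 ≤ K)
    (y : EuclideanSpace ℝ (Fin N)) (f : Fin (K + 1) → EuclideanSpace ℝ (Fin N))
    (hf0 : ∀ i, f 0 i = 1)
    (hli : LinearIndependent ℝ f)
    (hnp : ∀ j, ⟪f j - y, f j⟫_ℝ ≠ 0)
    (σ : ℝ → ℝ) (hσ : ContDiff ℝ 2 σ) (z₀ : ℝ) (hz₀ : deriv σ z₀ ≠ 0) :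
    ∃ (θ : Fin (K + 1) → ℝ) (p s : ℝ) (g : EuclideanSpace ℝ (Fin N)),
      (∀ i, g i = p * σ (∑ j, θ j * f j i) + s) ∧
      ‖g - y‖ ^ 2 < Finset.univ.inf' Finset.univ_nonempty (fun j => ‖f j - y‖ ^ 2) :=
  stmt_10_general N K y f hf0 hnp σ hσ z₀ hz₀
end

section
/- Let N ≥ 1, let g, f, y ∈ ℝ^N, and let σ : ℝ → ℝ be admissible (twice continuously differentiable with σ′(z₀) ≠ 0 for some z₀ ∈ ℝ). If ⟨g − y, g⟩ ≠ 0 or ⟨g − y, f⟩ ≠ 0, then there exist real numbers p, s, β_0, β_1, β_2 such that the vector h ∈ ℝ^N defined coordinatewise by h_i = p·σ(β_0 + β_1 g_i + β_2 f_i) + s satisfies ‖h − y‖² < ‖g − y‖². -/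
/-!
First improve `g` linearly: moving along `g` or `f`, whichever direction has nonzero inner
product with the residual `g - y`, gives `w = a • g + b • f` with `‖w - y‖ < ‖g - y‖`. Then
realise `w` by the activation: since `σ'(z₀) ≠ 0`, the affinely rescaled neuron
`(σ (z₀ + t u) - σ z₀) / (t σ'(z₀))` tends to `u` as `t → 0`, so for small `t ≠ 0` the
neuron with inputs `t * w i` is as close to `w` as we like.
-/

open scoped InnerProductSpace
open Filter Topology

section InnerProductSpace

variable {E : Type*} [NormedAddCommGroup E] [InnerProductSpace ℝ E]

theorem exists_norm_add_smul_sq_lt_of_inner_ne_zero {x v : E} (h : ⟪x, v⟫_ℝ ≠ 0) :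
    ∃ c : ℝ, ‖x + c • v‖ ^ 2 < ‖x‖ ^ 2 := by
  have hv : ‖v‖ ≠ 0 := by
    rw [norm_ne_zero_iff]
    rintro rfl
    exact h (inner_zero_right x)
  -- the minimiser of the quadratic `c ↦ ‖x‖² + 2 c ⟪x, v⟫ + c² ‖v‖²`
  refine ⟨-⟪x, v⟫_ℝ / ‖v‖ ^ 2, ?_⟩
  have hdecrease : ‖x + (-⟪x, v⟫_ℝ / ‖v‖ ^ 2) • v‖ ^ 2 = ‖x‖ ^ 2 - ⟪x, v⟫_ℝ ^ 2 / ‖v‖ ^ 2 := by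
    rw [norm_add_sq_real, real_inner_smul_right, norm_smul, mul_pow, Real.norm_eq_abs, sq_abs]
    field_simp
    ring
  rw [hdecrease, sub_lt_self_iff]
  positivity

theorem exists_norm_smul_add_smul_sub_sq_lt {g f y : E}
    (hne : ⟪g - y, g⟫_ℝ ≠ 0 ∨ ⟪g - y, f⟫_ℝ ≠ 0) :
    ∃ a b : ℝ, ‖a • g + b • f - y‖ ^ 2 < ‖g - y‖ ^ 2 := by
  rcases hne with hg | hf
  · obtain ⟨c, hc⟩ := exists_norm_add_smul_sq_lt_of_inner_ne_zero hg
    refine ⟨1 + c, 0, ?_⟩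
    convert hc using 3
    module
  · obtain ⟨c, hc⟩ := exists_norm_add_smul_sq_lt_of_inner_ne_zero hf
    refine ⟨1, c, ?_⟩
    convert hc using 3
    module

end InnerProductSpace

theorem tendsto_sub_div_mul_deriv {σ : ℝ → ℝ} {z₀ : ℝ} (hz₀ : deriv σ z₀ ≠ 0) (u : ℝ) :
    Tendsto (fun t => (σ (z₀ + t * u) - σ z₀) / (t * deriv σ z₀)) (𝓝[≠] 0) (𝓝 u) := by
  have hline : HasDerivAt (fun t => σ (z₀ + t * u)) (deriv σ z₀ * u) 0 := by
    have hσ : HasDerivAt σ (deriv σ z₀) (z₀ + 0 * u) := by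
      simpa using (differentiableAt_of_deriv_ne_zero hz₀).hasDerivAt
    exact hσ.comp 0 ((hasDerivAt_mul_const u).const_add z₀)
  have hslope := (hasDerivAt_iff_tendsto_slope.mp hline).div_const (deriv σ z₀)
  rw [mul_div_cancel_left₀ u hz₀] at hslope
  refine hslope.congr fun t => ?_
  rw [slope_def_field, div_div]
  simp

theorem tendsto_toLp_sub_div_mul_deriv {ι : Type*} {σ : ℝ → ℝ} {z₀ : ℝ} (hz₀ : deriv σ z₀ ≠ 0)
    (w : EuclideanSpace ℝ ι) :
    Tendsto (fun t => WithLp.toLp 2 fun i => (σ (z₀ + t * w i) - σ z₀) / (t * deriv σ z₀))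
      (𝓝[≠] 0) (𝓝 w) :=
  ((PiLp.continuous_toLp 2 _).tendsto _).comp
    (tendsto_pi_nhds.2 fun i => tendsto_sub_div_mul_deriv hz₀ (w i))

theorem stmt_14_general (N : ℕ) (g f y : EuclideanSpace ℝ (Fin N))
    (σ : ℝ → ℝ) (z₀ : ℝ) (hz₀ : deriv σ z₀ ≠ 0)
    (hne : ⟪g - y, g⟫_ℝ ≠ 0 ∨ ⟪g - y, f⟫_ℝ ≠ 0) :
    ∃ (p s β₀ β₁ β₂ : ℝ) (h : EuclideanSpace ℝ (Fin N)),
      (∀ i, h i = p * σ (β₀ + β₁ * g i + β₂ * f i) + s) ∧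
      ‖h - y‖ ^ 2 < ‖g - y‖ ^ 2 := by
  obtain ⟨a, b, hab⟩ := exists_norm_smul_add_smul_sub_sq_lt hne
  have hopen : IsOpen {v : EuclideanSpace ℝ (Fin N) | ‖v - y‖ ^ 2 < ‖g - y‖ ^ 2} :=
    isOpen_lt (by fun_prop) continuous_const
  obtain ⟨t, ht, ht0⟩ :=
    (((tendsto_toLp_sub_div_mul_deriv hz₀ (a • g + b • f)).eventually
      (hopen.mem_nhds hab)).and self_mem_nhdsWithin).exists
  have htd : t * deriv σ z₀ ≠ 0 := mul_ne_zero ht0 hz₀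
  refine ⟨(t * deriv σ z₀)⁻¹, -σ z₀ / (t * deriv σ z₀), z₀, t * a, t * b, _, fun i => ?_, ht⟩
  simp only [PiLp.add_apply, PiLp.smul_apply, smul_eq_mul]
  field_simp
  ring_nf

/-- Adding a component in a new layer: if `⟨g − y, g⟩ ≠ 0` or `⟨g − y, f⟩ ≠ 0` and `σ` is
admissible, then some `h_i = p·σ(β₀ + β₁ g_i + β₂ f_i) + s` satisfies
`‖h − y‖² < ‖g − y‖²`. -/
theorem stmt_14 (N : ℕ) (hN : 1 ≤ N) (g f y : EuclideanSpace ℝ (Fin N))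
    (σ : ℝ → ℝ) (hσ : ContDiff ℝ 2 σ) (z₀ : ℝ) (hz₀ : deriv σ z₀ ≠ 0)
    (hne : ⟪g - y, g⟫_ℝ ≠ 0 ∨ ⟪g - y, f⟫_ℝ ≠ 0) :
    ∃ (p s β₀ β₁ β₂ : ℝ) (h : EuclideanSpace ℝ (Fin N)),
      (∀ i, h i = p * σ (β₀ + β₁ * g i + β₂ * f i) + s) ∧
      ‖h - y‖ ^ 2 < ‖g - y‖ ^ 2 :=
  stmt_14_general N g f y σ z₀ hz₀ hne
end

section
/- Let σ : ℝ → ℝ be admissible, i.e., twice continuously differentiable with σ′(z₀) ≠ 0 for some z₀ ∈ ℝ, and let H ≥ 1 be an integer. Then for every finite list of real numbers a_1, …, a_N and every ε > 0, there exist affine maps A_0, A_1, …, A_H : ℝ → ℝ such that the depth-H alternating composition satisfies |(A_H ∘ σ ∘ A_{H−1} ∘ σ ∘ ⋯ ∘ σ ∘ A_0)(a_i) − a_i| < ε for every i ∈ {1,…,N}. (That is, an H-fold affine–σ–affine network can approximate the identity to within ε on any finite set of reals.) -/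
def altComp (σ : ℝ → ℝ) : (H : ℕ) → (Fin (H + 1) → ℝ → ℝ) → ℝ → ℝ
  | 0, A, x => A 0 x
  | H + 1, A, x => A (Fin.last (H + 1)) (σ (altComp σ H (fun k => A (Fin.castSucc k)) x))

/-!
Fix the finite family of points `a` and look at the vectors of values `(N(a i))ᵢ` of all
depth-`H` networks `N`. Their closure is stable under affine post-composition (change the last
layer) and, since `σ` is continuous, `σ` maps it into the closure for depth `H + 1`. By induction,
every affine function `x ↦ δ x + z₀` is approximable at depth `H`, hence so is
`x ↦ (σ (z₀ + δ x) - σ z₀) / (δ σ'(z₀))` at depth `H + 1`; these converge pointwise to the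
identity as `δ → 0`, so the identity lies in the closure at depth `H + 1`.
-/

open Filter Topology

def IsAffine (f : ℝ → ℝ) : Prop := ∃ c d : ℝ, f = fun x => c * x + d

lemma isAffine_mul_add (p q : ℝ) : IsAffine fun x => p * x + q := ⟨p, q, rfl⟩

lemma IsAffine.comp {f g : ℝ → ℝ} (hf : IsAffine f) (hg : IsAffine g) : IsAffine (f ∘ g) := by
  obtain ⟨c, d, rfl⟩ := hf
  obtain ⟨c', d', rfl⟩ := hg
  exact ⟨c * c', c * d' + d, by ext x; simp only [Function.comp_apply]; ring⟩

section altComp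

variable (σ : ℝ → ℝ)

lemma altComp_snoc (H : ℕ) (A : Fin (H + 1) → ℝ → ℝ) (f : ℝ → ℝ) (x : ℝ) :
    altComp σ (H + 1) (Fin.snoc A f) x = f (σ (altComp σ H A x)) := by
  simp [altComp]

lemma altComp_update_last (H : ℕ) (A : Fin (H + 1) → ℝ → ℝ) (g : ℝ → ℝ) (x : ℝ) :
    altComp σ H (Function.update A (Fin.last H) (g ∘ A (Fin.last H))) x =
      g (altComp σ H A x) := by
  cases H <;> simp [altComp, Function.update, Fin.castSucc_ne_last]

end altComp

section networkValues

variable (σ : ℝ → ℝ) {ι : Type*} (a : ι → ℝ)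

def networkValues (H : ℕ) : Set (ι → ℝ) :=
  {v | ∃ A : Fin (H + 1) → ℝ → ℝ, (∀ k, IsAffine (A k)) ∧ (fun i => altComp σ H A (a i)) = v}

variable {σ a}

lemma affine_mem_networkValues_zero (p q : ℝ) :
    (fun i => p * a i + q) ∈ networkValues σ a 0 :=
  ⟨fun _ x => p * x + q, fun _ => isAffine_mul_add p q, rfl⟩

lemma affine_comp_mem_networkValues {H : ℕ} {v : ι → ℝ} (hv : v ∈ networkValues σ a H)
    (p q : ℝ) : (fun i => p * v i + q) ∈ networkValues σ a H := by
  obtain ⟨A, hA, rfl⟩ := hv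
  refine ⟨Function.update A (Fin.last H) ((fun y => p * y + q) ∘ A (Fin.last H)), ?_, ?_⟩
  · intro k
    by_cases hk : k = Fin.last H
    · subst hk
      simpa using (isAffine_mul_add p q).comp (hA _)
    · simpa [Function.update, hk] using hA k
  · ext i
    exact altComp_update_last σ H A _ (a i)

lemma comp_mem_networkValues_succ {H : ℕ} {v : ι → ℝ} (hv : v ∈ networkValues σ a H) :
    (fun i => σ (v i)) ∈ networkValues σ a (H + 1) := by
  obtain ⟨A, hA, rfl⟩ := hv
  refine ⟨Fin.snoc A id, fun k => ?_, ?_⟩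
  · refine Fin.lastCases ?_ (fun j => ?_) k
    · simp only [Fin.snoc_last]
      exact ⟨1, 0, by ext; simp⟩
    · simpa using hA j
  · ext i
    exact altComp_snoc σ H A id (a i)

lemma affine_comp_mem_closure_networkValues {H : ℕ} {v : ι → ℝ}
    (hv : v ∈ closure (networkValues σ a H)) (p q : ℝ) :
    (fun i => p * v i + q) ∈ closure (networkValues σ a H) :=
  map_mem_closure (f := fun w i => p * w i + q) (by fun_prop) hv
    fun _ hw => affine_comp_mem_networkValues hw p q

lemma comp_mem_closure_networkValues_succ (hσ : Continuous σ) {H : ℕ} {v : ι → ℝ}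
    (hv : v ∈ closure (networkValues σ a H)) :
    (fun i => σ (v i)) ∈ closure (networkValues σ a (H + 1)) :=
  map_mem_closure (f := fun w i => σ (w i)) (by fun_prop) hv
    fun w hw => (comp_mem_networkValues_succ hw : (fun i => σ (w i)) ∈ _)

lemma tendsto_difference_quotient {c z₀ : ℝ} (hσ : HasDerivAt σ c z₀) (x : ℝ) :
    Tendsto (fun δ => δ⁻¹ * (σ (z₀ + δ * x) - σ z₀)) (𝓝[≠] 0) (𝓝 (c * x)) := by
  have hd : HasDerivAt (fun δ => σ (z₀ + δ * x)) (c * x) 0 := by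
    have hin : HasDerivAt (fun δ : ℝ => z₀ + δ * x) x 0 := by
      simpa using ((hasDerivAt_id (0 : ℝ)).mul_const x).const_add z₀
    exact hσ.comp_of_eq 0 hin (by simp)
  simpa using hasDerivAt_iff_tendsto_slope_zero.mp hd

theorem affine_mem_closure_networkValues (hσ : Continuous σ) {c z₀ : ℝ}
    (hd : HasDerivAt σ c z₀) (hc : c ≠ 0) (H : ℕ) (p q : ℝ) :
    (fun i => p * a i + q) ∈ closure (networkValues σ a H) := by
  induction H generalizing p q with
  | zero => exact subset_closure (affine_mem_networkValues_zero p q)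
  | succ H ih =>
    suffices ha : a ∈ closure (networkValues σ a (H + 1)) from
      affine_comp_mem_closure_networkValues ha p q
    have hquot : ∀ δ : ℝ, (fun i => (δ * c)⁻¹ * σ (δ * a i + z₀) + -((δ * c)⁻¹ * σ z₀)) ∈
        closure (networkValues σ a (H + 1)) := fun δ =>
      affine_comp_mem_closure_networkValues
        (comp_mem_closure_networkValues_succ hσ (ih δ z₀)) _ _
    have hlim : Tendsto (fun δ i => (δ * c)⁻¹ * σ (δ * a i + z₀) + -((δ * c)⁻¹ * σ z₀))
        (𝓝[≠] 0) (𝓝 a) := by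
      refine tendsto_pi_nhds.mpr fun i => ?_
      have := (tendsto_difference_quotient hd (a i)).const_mul c⁻¹
      rw [inv_mul_cancel_left₀ hc] at this
      refine this.congr fun δ => ?_
      rw [mul_inv, add_comm (δ * a i)]
      ring
    simpa using mem_closure_of_tendsto hlim (Eventually.of_forall hquot)

end networkValues

theorem stmt_15_general (σ : ℝ → ℝ) (hσ : ContDiff ℝ 2 σ) (z₀ : ℝ) (hz₀ : deriv σ z₀ ≠ 0)
    (H : ℕ) (N : ℕ) (a : Fin N → ℝ) (ε : ℝ) (hε : 0 < ε) :
    ∃ A : Fin (H + 1) → ℝ → ℝ,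
      (∀ k, ∃ c d : ℝ, A k = fun x => c * x + d) ∧
      ∀ i : Fin N, |altComp σ H A (a i) - a i| < ε := by
  have ha : a ∈ closure (networkValues σ a H) := by
    simpa using affine_mem_closure_networkValues hσ.continuous
      (differentiableAt_of_deriv_ne_zero hz₀).hasDerivAt hz₀ H 1 0
  obtain ⟨_, ⟨A, hA, rfl⟩, hdist⟩ := Metric.mem_closure_iff.mp ha ε hε
  refine ⟨A, hA, fun i => ?_⟩
  rw [abs_sub_comm, ← Real.dist_eq]
  exact (dist_pi_lt_iff hε).mp hdist i

/-- If `σ` is admissible, then for every `H ≥ 1`, every finite list of reals and every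
`ε > 0`, there are affine maps `A_0, …, A_H` such that the depth-`H` alternating
composition `A_H ∘ σ ∘ ⋯ ∘ σ ∘ A_0` approximates the identity within `ε` on the list. -/
theorem stmt_15 (σ : ℝ → ℝ) (hσ : ContDiff ℝ 2 σ) (z₀ : ℝ) (hz₀ : deriv σ z₀ ≠ 0)
    (H : ℕ) (hH : 1 ≤ H) (N : ℕ) (a : Fin N → ℝ) (ε : ℝ) (hε : 0 < ε) :
    ∃ A : Fin (H + 1) → ℝ → ℝ,
      (∀ k, ∃ c d : ℝ, A k = fun x => c * x + d) ∧
      ∀ i : Fin N, |altComp σ H A (a i) - a i| < ε :=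
  stmt_15_general σ hσ z₀ hz₀ H N a ε hε
end
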